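/- arXiv:1108.0987 — 9 statements merged into one kernel-verified Lean document; each statement's English description precedes it below -/
import Mathlib

section
/- Let x, y, z, a₀, a₁, a₂ be real numbers. If P_H(z) · R(a₁) · P_H(x) · R(a₀) · P_H(y) · R(a₂) = I (the 2×2 identity matrix), then sinh(x + z) − sinh(y) = a₁ · sinh(x) · sinh(z). -/
/-- The billiard reflection matrix acting on Jacobi fields. -/
noncomputable def R (a : ℝ) : Matrix (Fin 2) (Fin 2) ℝ := !![-1, 0; a, -1]

/-- The Jacobi-field evolution matrix along a geodesic of length `τ` on the
hyperbolic plane of curvature `-1`. -/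
noncomputable def P_H (τ : ℝ) : Matrix (Fin 2) (Fin 2) ℝ :=
  !![Real.cosh τ, Real.sinh τ; Real.sinh τ, Real.cosh τ]

/-! The closing condition `P_H z R(a₁) P_H x · R(a₀) P_H y R(a₂) = 1` identifies
`P_H z R(a₁) P_H x` with the inverse `R(-a₂) P_H(-y) R(-a₀)` of the second factor.
Multiplying by reflection matrices on both sides does not change the top-right entry,
so comparing top-right entries gives `a₁ sinh x sinh z - sinh (x + z) = -sinh y`. -/

open Real

lemma R_mul_R_neg (a : ℝ) : R a * R (-a) = 1 := by
  ext i j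
  fin_cases i <;> fin_cases j <;> simp [R, Matrix.mul_apply, Fin.sum_univ_two]

lemma P_H_add (s t : ℝ) : P_H (s + t) = P_H s * P_H t := by
  ext i j
  fin_cases i <;> fin_cases j <;> simp [P_H, cosh_add, sinh_add] <;> ring

lemma P_H_mul_P_H_neg (t : ℝ) : P_H t * P_H (-t) = 1 := by
  rw [← P_H_add, add_neg_cancel]
  ext i j
  fin_cases i <;> fin_cases j <;> simp [P_H]

lemma R_mul_mul_R_apply_zero_one (b c : ℝ) (M : Matrix (Fin 2) (Fin 2) ℝ) :
    (R b * M * R c) 0 1 = M 0 1 := by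
  simp [R, Matrix.mul_apply, Fin.sum_univ_two, Matrix.vecMul, dotProduct]

lemma P_H_mul_R_mul_P_H_apply_zero_one (z a x : ℝ) :
    (P_H z * R a * P_H x) 0 1 = a * sinh x * sinh z - sinh (x + z) := by
  simp [P_H, R, Matrix.mul_apply, Fin.sum_univ_two, sinh_add]
  ring

theorem stmt_0 (x y z a₀ a₁ a₂ : ℝ)
    (h : P_H z * R a₁ * P_H x * R a₀ * P_H y * R a₂ = 1) :
    Real.sinh (x + z) - Real.sinh y = a₁ * Real.sinh x * Real.sinh z := by
  have h_left : (P_H z * R a₁ * P_H x) * (R a₀ * P_H y * R a₂) = 1 := by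
    simpa only [mul_assoc] using h
  have h_right : (R a₀ * P_H y * R a₂) * (R (-a₂) * P_H (-y) * R (-a₀)) = 1 := by
    calc _ = R a₀ * (P_H y * (R a₂ * R (-a₂)) * P_H (-y)) * R (-a₀) := by
          simp only [mul_assoc]
      _ = 1 := by rw [R_mul_R_neg, mul_one, P_H_mul_P_H_neg, mul_one, R_mul_R_neg]
  have h_eq : (P_H z * R a₁ * P_H x) 0 1 = (R (-a₂) * P_H (-y) * R (-a₀)) 0 1 := by
    rw [left_inv_eq_right_inv h_left h_right]
  rw [P_H_mul_R_mul_P_H_apply_zero_one, R_mul_mul_R_apply_zero_one] at h_eq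
  simp only [P_H, Matrix.of_apply, Matrix.cons_val', Matrix.cons_val_zero, Matrix.cons_val_one,
    sinh_neg] at h_eq
  linarith
end

section
/- Let x, y, z, a₀, a₁, a₂ be real numbers. If P_S(z) · R(a₁) · P_S(x) · R(a₀) · P_S(y) · R(a₂) = I (the 2×2 identity matrix), then sin(x + z) − sin(y) = a₁ · sin(x) · sin(z). -/
/-- The Jacobi-field evolution matrix along a geodesic of length `τ` on the
unit sphere (curvature `+1`). -/
noncomputable def P_S (τ : ℝ) : Matrix (Fin 2) (Fin 2) ℝ :=
  !![Real.cos τ, Real.sin τ; -Real.sin τ, Real.cos τ]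

theorem stmt_1 (x y z a₀ a₁ a₂ : ℝ)
    (h : P_S z * R a₁ * P_S x * R a₀ * P_S y * R a₂ = 1) :
    Real.sin (x + z) - Real.sin y = a₁ * Real.sin x * Real.sin z := by
  have h' : (P_S z * R a₁ * P_S x) * (R a₀ * P_S y * R a₂) = 1 := by
    rw [← h]; noncomm_ring
  have h2 := mul_eq_one_comm.mp h'
  have e1 := congrFun (congrFun h2 0) 0
  have e2 := congrFun (congrFun h2 0) 1
  simp [P_S, R, Matrix.mul_apply, Fin.sum_univ_two, Matrix.one_apply] at e1 e2
  have hx := Real.sin_sq_add_cos_sq x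
  have hz := Real.sin_sq_add_cos_sq z
  rw [Real.sin_add]
  linear_combination
    ((-Real.cos z + Real.sin z * a₁) * Real.sin x - Real.sin z * Real.cos x) * e1 -
    ((-Real.cos z + Real.sin z * a₁) * Real.cos x + Real.sin z * Real.sin x) * e2 +
    Real.sin y * ((Real.sin x ^ 2 + Real.cos x ^ 2) * hz + hx)
end

section
/- Let x, y, z, a₀, a₁, a₂ be real numbers. If P_E(z) · R(a₁) · P_E(x) · R(a₀) · P_E(y) · R(a₂) = I (the 2×2 identity matrix), then x + z − y = a₁ · x · z. -/
/-- The Jacobi-field evolution matrix along a straight segment of length `τ`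
in the Euclidean plane. -/
noncomputable def P_E (τ : ℝ) : Matrix (Fin 2) (Fin 2) ℝ := !![1, τ; 0, 1]

/-! Splitting the orbit at the reflection `R a₀`, the identity says that
`P_E z * R a₁ * P_E x` is the inverse of `R a₀ * P_E y * R a₂`. Both are unimodular, so the
inverse is the adjugate, whose upper-right entry is minus the original one. That entry is
`a₁ x z - x - z` on one side and `y` on the other. -/

theorem Matrix.eq_adjugate_of_mul_eq_one_of_det_eq_one {n R : Type*} [Fintype n]
    [DecidableEq n] [CommRing R] {A B : Matrix n n R} (hAB : A * B = 1) (hB : B.det = 1) :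
    A = B.adjugate := by
  calc A = A * (B * B.adjugate) := by rw [Matrix.mul_adjugate, hB, one_smul, Matrix.mul_one]
    _ = B.adjugate := by rw [← Matrix.mul_assoc, hAB, Matrix.one_mul]

theorem Matrix.apply_zero_one_eq_neg_of_mul_eq_one_of_det_eq_one {R : Type*} [CommRing R]
    {A B : Matrix (Fin 2) (Fin 2) R} (hAB : A * B = 1) (hB : B.det = 1) :
    A 0 1 = -B 0 1 := by
  rw [Matrix.eq_adjugate_of_mul_eq_one_of_det_eq_one hAB hB, Matrix.adjugate_fin_two]
  simp

theorem det_R (a : ℝ) : (R a).det = 1 := by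
  simp [R, Matrix.det_fin_two]

theorem det_P_E (τ : ℝ) : (P_E τ).det = 1 := by
  simp [P_E, Matrix.det_fin_two]

theorem P_E_mul_R_mul_P_E_apply_zero_one (z a x : ℝ) :
    (P_E z * R a * P_E x) 0 1 = a * x * z - x - z := by
  simp [P_E, R, Matrix.mul_apply, Fin.sum_univ_two]
  ring

theorem R_mul_P_E_mul_R_apply_zero_one (a y b : ℝ) : (R a * P_E y * R b) 0 1 = y := by
  simp [P_E, R, Matrix.mul_apply, Fin.sum_univ_two]

theorem stmt_2 (x y z a₀ a₁ a₂ : ℝ)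
    (h : P_E z * R a₁ * P_E x * R a₀ * P_E y * R a₂ = 1) :
    x + z - y = a₁ * x * z := by
  have hsplit : (P_E z * R a₁ * P_E x) * (R a₀ * P_E y * R a₂) = 1 := by
    simpa only [Matrix.mul_assoc] using h
  have hdet : (R a₀ * P_E y * R a₂).det = 1 := by
    simp only [Matrix.det_mul, det_R, det_P_E, mul_one]
  have hentry := Matrix.apply_zero_one_eq_neg_of_mul_eq_one_of_det_eq_one hsplit hdet
  rw [P_E_mul_R_mul_P_E_apply_zero_one, R_mul_P_E_mul_R_apply_zero_one] at hentry
  linarith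
end

section
/- Let x, y, z be positive real numbers with y ≠ x + z, let φ ∈ (0, π), and let k be a real number. Assume that sinh(x + z) − sinh(y) = (2k / sin(φ)) · sinh(x) · sinh(z) and that cosh(y) = cosh(x + z) − 2 sin²(φ) · sinh(x) · sinh(z). Then, setting L = x + y + z, one has k = sin³(φ) · cosh(L/2) / sinh(L/2). -/
/-!
Put `m = L / 2` and `d = (x + z - y) / 2`, so that `x + z = m + d` and `y = m - d`. The sum-to-product
formulas turn the two hypotheses into `cosh m * sinh d = (k / sin φ) * sinh x * sinh z` and
`sinh m * sinh d = sin φ ^ 2 * sinh x * sinh z`. The right side of the second is nonzero, so dividing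
the first relation by the second eliminates the unknown `sinh d` and leaves
`cosh m / sinh m = k / sin φ ^ 3`.
-/

namespace Real

theorem sinh_add_sub_sinh_sub (a b : ℝ) : sinh (a + b) - sinh (a - b) = 2 * sinh b * cosh a := by
  rw [sinh_add, sinh_sub]; ring

theorem cosh_add_sub_cosh_sub (a b : ℝ) : cosh (a + b) - cosh (a - b) = 2 * sinh a * sinh b := by
  rw [cosh_add, cosh_sub]; ring

theorem sinh_sub_sinh (x y : ℝ) : sinh x - sinh y = 2 * sinh ((x - y) / 2) * cosh ((x + y) / 2) := by
  have h := sinh_add_sub_sinh_sub ((x + y) / 2) ((x - y) / 2)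
  rwa [show (x + y) / 2 + (x - y) / 2 = x by ring, show (x + y) / 2 - (x - y) / 2 = y by ring] at h

theorem cosh_sub_cosh (x y : ℝ) : cosh x - cosh y = 2 * sinh ((x + y) / 2) * sinh ((x - y) / 2) := by
  have h := cosh_add_sub_cosh_sub ((x + y) / 2) ((x - y) / 2)
  rwa [show (x + y) / 2 + (x - y) / 2 = x by ring, show (x + y) / 2 - (x - y) / 2 = y by ring] at h

end Real

theorem stmt_5_general (x y z φ k : ℝ) (hx : 0 < x) (hz : 0 < z)
    (hφ : φ ∈ Set.Ioo 0 Real.pi)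
    (hcompat : Real.sinh (x + z) - Real.sinh y =
      (2 * k / Real.sin φ) * Real.sinh x * Real.sinh z)
    (hcos : Real.cosh y =
      Real.cosh (x + z) - 2 * Real.sin φ ^ 2 * Real.sinh x * Real.sinh z)
    (L : ℝ) (hL : L = x + y + z) :
    k = Real.sin φ ^ 3 * Real.cosh (L / 2) / Real.sinh (L / 2) := by
  obtain ⟨hφ0, hφπ⟩ := hφ
  have hsin : Real.sin φ ≠ 0 := (Real.sin_pos_of_pos_of_lt_pi hφ0 hφπ).ne'
  have hS : Real.sinh x * Real.sinh z ≠ 0 :=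
    mul_ne_zero (Real.sinh_pos_iff.2 hx).ne' (Real.sinh_pos_iff.2 hz).ne'
  have hm : (x + z + y) / 2 = L / 2 := by rw [hL]; ring
  set m := L / 2
  set d := (x + z - y) / 2
  have hsinh : 2 * Real.sinh d * Real.cosh m = 2 * k / Real.sin φ * Real.sinh x * Real.sinh z := by
    rw [← hcompat, Real.sinh_sub_sinh, hm]
  have hcosh : 2 * Real.sinh m * Real.sinh d = 2 * Real.sin φ ^ 2 * Real.sinh x * Real.sinh z := by
    rw [← hm, ← Real.cosh_sub_cosh]; linarith
  have hsinh_m : Real.sinh m ≠ 0 := by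
    intro h
    apply mul_ne_zero (mul_ne_zero two_ne_zero (pow_ne_zero 2 hsin)) hS
    rw [h] at hcosh
    linear_combination -hcosh
  have key : Real.sinh x * Real.sinh z * (k * Real.sinh m - Real.sin φ ^ 3 * Real.cosh m) = 0 := by
    field_simp at hsinh
    linear_combination (Real.sin φ * Real.cosh m / 2) * hcosh - Real.sinh m * hsinh
  rw [eq_div_iff hsinh_m]
  linear_combination (mul_eq_zero.1 key).resolve_left hS

theorem stmt_5 (x y z φ k : ℝ) (hx : 0 < x) (hy : 0 < y) (hz : 0 < z)
    (hne : y ≠ x + z) (hφ : φ ∈ Set.Ioo 0 Real.pi)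
    (hcompat : Real.sinh (x + z) - Real.sinh y =
      (2 * k / Real.sin φ) * Real.sinh x * Real.sinh z)
    (hcos : Real.cosh y =
      Real.cosh (x + z) - 2 * Real.sin φ ^ 2 * Real.sinh x * Real.sinh z)
    (L : ℝ) (hL : L = x + y + z) :
    k = Real.sin φ ^ 3 * Real.cosh (L / 2) / Real.sinh (L / 2) :=
  stmt_5_general x y z φ k hx hz hφ hcompat hcos L hL
end

section
/- Let x, y, z be real numbers with sin(x) · sin(z) ≠ 0, let φ be a real number with sin(φ) ≠ 0, and let k be a real number. Set L = x + y + z and assume sin(L/2) ≠ 0. Assume that sin(x + z) − sin(y) = (2k / sin(φ)) · sin(x) · sin(z) and that cos(y) = cos(x + z) + 2 sin²(φ) · sin(x) · sin(z). Then k = sin³(φ) · cos(L/2) / sin(L/2). -/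
/-! By sum-to-product, both hypotheses factor through `sin ((x + z - y) / 2)`: the compatibility
condition reads `sin ((x + z - y) / 2) * cos (L / 2) = (k / sin φ) * sin x * sin z` and the law of
cosines reads `sin (L / 2) * sin ((x + z - y) / 2) = sin φ ^ 2 * sin x * sin z`. Eliminating the
common factor between the two gives `k`. -/

open Real

lemma eq_mul_div_of_mul_eq_of_mul_eq {K : Type*} [Field K] {k s S A B C : K}
    (hS : S ≠ 0) (hs : s ≠ 0) (hB : B ≠ 0)
    (hAC : A * C = k / s * S) (hBA : B * A = s ^ 2 * S) :
    k = s ^ 3 * C / B := by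
  rw [eq_div_iff hB]
  apply mul_right_cancel₀ hS
  field_simp at hAC
  linear_combination s * C * hBA - B * hAC

lemma cos_sub_cos_eq_two_mul_sin_mul_sin (a b : ℝ) :
    cos b - cos a = 2 * sin ((a + b) / 2) * sin ((a - b) / 2) := by
  rw [cos_sub_cos, add_comm b, ← neg_sub a b, neg_div, sin_neg]
  ring

theorem stmt_6 (x y z φ k : ℝ) (hxz : Real.sin x * Real.sin z ≠ 0)
    (hφ : Real.sin φ ≠ 0) (L : ℝ) (hL : L = x + y + z)
    (hL2 : Real.sin (L / 2) ≠ 0)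
    (hcompat : Real.sin (x + z) - Real.sin y =
      (2 * k / Real.sin φ) * Real.sin x * Real.sin z)
    (hcos : Real.cos y =
      Real.cos (x + z) + 2 * Real.sin φ ^ 2 * Real.sin x * Real.sin z) :
    k = Real.sin φ ^ 3 * Real.cos (L / 2) / Real.sin (L / 2) := by
  have hL' : L = x + z + y := by rw [hL]; ring
  rw [hL'] at hL2 ⊢
  refine eq_mul_div_of_mul_eq_of_mul_eq hxz hφ hL2 (A := sin ((x + z - y) / 2)) ?_ ?_
  · linear_combination (hcompat - sin_sub_sin (x + z) y) / 2
  · linear_combination (hcos - cos_sub_cos_eq_two_mul_sin_mul_sin (x + z) y) / 2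
end

section
/- Let x, y, z be positive real numbers, let φ be a real number with sin(φ) ≠ 0, and let k be a real number. Assume that x + z − y = (2k / sin(φ)) · x · z and that y² = (x + z)² − 4 sin²(φ) · x · z. Then, setting L = x + y + z, one has k = 2 sin³(φ) / L. -/
/-! The law of cosines factors as `(x + z - y) · L = 4 sin²φ · x z`, while the compatibility
condition says `sin φ · (x + z - y) = 2k · x z`. Multiplying the second by `L` and the first by
`sin φ` and comparing gives `2k · x z · L = 4 sin³φ · x z`; cancelling `x z` yields the claim. -/

theorem sub_mul_add_eq_of_sq_eq_sq_sub {R : Type*} [CommRing R] {x y z c : R}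
    (h : y ^ 2 = (x + z) ^ 2 - c) : (x + z - y) * (x + y + z) = c := by
  linear_combination -h

section Field

variable {K : Type*} [Field K] {x y z s k : K}

theorem mul_sub_eq_of_sub_eq_div_mul (hs : s ≠ 0) (h : x + z - y = (2 * k / s) * x * z) :
    s * (x + z - y) = 2 * k * x * z := by
  rw [h]
  field_simp

theorem eq_div_perimeter_of_compat_of_sq [CharZero K] (hxz : x * z ≠ 0) (hL : x + y + z ≠ 0)
    (hs : s ≠ 0) (hcompat : x + z - y = (2 * k / s) * x * z)
    (hcos : y ^ 2 = (x + z) ^ 2 - 4 * s ^ 2 * x * z) :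
    k = 2 * s ^ 3 / (x + y + z) := by
  have hexcess := sub_mul_add_eq_of_sq_eq_sq_sub hcos
  have hcurv := mul_sub_eq_of_sub_eq_div_mul hs hcompat
  have hkey : 2 * (x * z) * (k * (x + y + z)) = 2 * (x * z) * (2 * s ^ 3) := by
    linear_combination s * hexcess - (x + y + z) * hcurv
  rw [eq_div_iff hL]
  exact mul_left_cancel₀ (mul_ne_zero two_ne_zero hxz) hkey

end Field

theorem stmt_7 (x y z φ k : ℝ) (hx : 0 < x) (hy : 0 < y) (hz : 0 < z)
    (hφ : Real.sin φ ≠ 0)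
    (hcompat : x + z - y = (2 * k / Real.sin φ) * x * z)
    (hcos : y ^ 2 = (x + z) ^ 2 - 4 * Real.sin φ ^ 2 * x * z)
    (L : ℝ) (hL : L = x + y + z) :
    k = 2 * Real.sin φ ^ 3 / L := by
  subst hL
  exact eq_div_perimeter_of_compat_of_sq (by positivity) (by positivity) hφ hcompat hcos
end

section
/- Let x, y, z be real numbers with sin(x)·sin(z) ≠ 0, let φ₁ be a real number with sin(φ₁) ≠ 0, let k₁, a₀, a₂ be real numbers, set L = x + y + z and assume sin(L/2) ≠ 0. Assume that P_S(z) · R(2k₁/sin(φ₁)) · P_S(x) · R(a₀) · P_S(y) · R(a₂) = I (the 2×2 identity matrix) and that cos(y) = cos(x)·cos(z) − sin(x)·sin(z)·cos(2φ₁). Then k₁ = sin³(φ₁) · cos(L/2) / sin(L/2). -/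
theorem stmt_9 (x y z φ₁ k₁ a₀ a₂ : ℝ) (hxz : Real.sin x * Real.sin z ≠ 0)
    (hφ : Real.sin φ₁ ≠ 0) (L : ℝ) (hL : L = x + y + z)
    (hL2 : Real.sin (L / 2) ≠ 0)
    (hmat : P_S z * R (2 * k₁ / Real.sin φ₁) * P_S x * R a₀ * P_S y * R a₂ = 1)
    (hcos : Real.cos y =
      Real.cos x * Real.cos z - Real.sin x * Real.sin z * Real.cos (2 * φ₁)) :
    k₁ = Real.sin φ₁ ^ 3 * Real.cos (L / 2) / Real.sin (L / 2) := by
  have h₁ : R a₂ * (P_S z * R (2 * k₁ / Real.sin φ₁) * P_S x * R a₀ * P_S y) = 1 :=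
    mul_eq_one_comm.mp hmat
  have h₂ : R a₂ * P_S z * R (2 * k₁ / Real.sin φ₁) * P_S x * (R a₀ * P_S y) = 1 := by
    rw [← h₁]; simp only [mul_assoc]
  have e00 := congrArg (fun M : Matrix (Fin 2) (Fin 2) ℝ => M 0 0) h₂
  have e01 := congrArg (fun M : Matrix (Fin 2) (Fin 2) ℝ => M 0 1) h₂
  simp [R, P_S, Matrix.mul_apply, Fin.sum_univ_succ, Matrix.one_apply] at e00 e01
  have py := Real.sin_sq_add_cos_sq y
  -- key scalar equation: sin(z+x) - b sin z sin x = sin y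
  have key : (Real.cos z - 2 * k₁ / Real.sin φ₁ * Real.sin z) * Real.sin x
      + Real.sin z * Real.cos x = Real.sin y := by
    linear_combination Real.sin y * e00 - Real.cos y * e01
      - ((Real.cos z - 2 * k₁ / Real.sin φ₁ * Real.sin z) * Real.sin x
          + Real.sin z * Real.cos x) * py
  -- clear the division
  have key2 : Real.sin φ₁ * (Real.cos z * Real.sin x + Real.sin z * Real.cos x)
      - 2 * k₁ * Real.sin z * Real.sin x = Real.sin φ₁ * Real.sin y := by
    field_simp at key
    linear_combination key
  -- trig identity: (sin(z+x) - sin y) sin(L/2) = (cos y - cos(z+x)) cos(L/2)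
  have hid : (Real.sin (z + x) - Real.sin y) * Real.sin (L / 2)
      = (Real.cos y - Real.cos (z + x)) * Real.cos (L / 2) := by
    have hzx : z + x = 2 * (L / 2) - y := by rw [hL]; ring
    have p := Real.sin_sq_add_cos_sq (L / 2)
    rw [hzx, Real.sin_sub, Real.cos_sub, Real.sin_two_mul, Real.cos_two_mul]
    linear_combination (2 * Real.cos (L / 2) * Real.cos y) * p
  rw [Real.sin_add, Real.cos_add] at hid
  have hφ2 : Real.cos (2 * φ₁) = 2 * Real.cos φ₁ ^ 2 - 1 := Real.cos_two_mul φ₁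
  have pφ := Real.sin_sq_add_cos_sq φ₁
  -- main polynomial identity
  have main : 2 * (Real.sin x * Real.sin z) *
      (k₁ * Real.sin (L / 2) - Real.sin φ₁ ^ 3 * Real.cos (L / 2)) = 0 := by
    linear_combination (-Real.sin (L / 2)) * key2
      + Real.sin φ₁ * hid
      + Real.sin φ₁ * Real.cos (L / 2) * hcos
      - Real.sin φ₁ * Real.cos (L / 2) * Real.sin x * Real.sin z * hφ2
      - 2 * Real.sin φ₁ * Real.cos (L / 2) * Real.sin x * Real.sin z * pφ
  have hne : (2 : ℝ) * (Real.sin x * Real.sin z) ≠ 0 := by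
    exact mul_ne_zero two_ne_zero hxz
  have main2 : k₁ * Real.sin (L / 2) = Real.sin φ₁ ^ 3 * Real.cos (L / 2) := by
    have := mul_eq_zero.mp main
    rcases this with h | h
    · exact absurd h hne
    · linarith
  field_simp
  linear_combination main2
end

section
/- Let x, y, z be positive real numbers, let φ ∈ (0, π), and let k, a₀, a₂ be real numbers. Assume that P_E(z) · R(2k/sin(φ)) · P_E(x) · R(a₀) · P_E(y) · R(a₂) = I (the 2×2 identity matrix) and that y² = x² + z² + 2·x·z·cos(2φ). Then, setting L = x + y + z, one has k = 2 sin³(φ) / L. -/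
/-!
Since `R a₂` sends `e₂` to `-e₂`, the identity `DT³ = I` only needs to be tracked on the Jacobi
field `e₂`; following it around the orbit gives `(2k / sin φ) x z = x + z - y`. The law of cosines
with `cos 2φ = 1 - 2 sin² φ` gives `(x + z - y) L = 4 x z sin² φ`, and dividing the two identities
eliminates `x + z - y`.
-/

open Matrix

theorem R_mulVec (a p q : ℝ) : R a *ᵥ ![p, q] = ![-p, a * p - q] := by
  ext i; fin_cases i <;> simp [R]; ring

theorem P_E_mulVec (τ p q : ℝ) : P_E τ *ᵥ ![p, q] = ![p + τ * q, q] := by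
  ext i; fin_cases i <;> simp [P_E]; ring

theorem mul_mul_eq_of_period_three {x y z a b c : ℝ}
    (h : P_E z * R b * P_E x * R a * P_E y * R c = 1) : b * x * z = x + z - y := by
  have hv := congrArg (· *ᵥ ![0, 1]) h
  simp only [← mulVec_mulVec, one_mulVec, R_mulVec, P_E_mulVec] at hv
  obtain ⟨h0, h1⟩ : _ ∧ _ := by simpa using hv
  linear_combination (x - (b * x - 1) * z) * h1 + (b * x - 1) * h0

theorem sub_mul_add_eq_of_law_of_cosines {x y z φ : ℝ}
    (h : y ^ 2 = x ^ 2 + z ^ 2 + 2 * x * z * Real.cos (2 * φ)) :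
    (x + z - y) * (x + y + z) = 4 * x * z * Real.sin φ ^ 2 := by
  rw [Real.cos_two_mul, Real.cos_sq'] at h
  linear_combination -h

theorem stmt_10_general (x y z φ k a₀ a₂ : ℝ) (hx : 0 < x) (hz : 0 < z)
    (hφ : φ ∈ Set.Ioo 0 Real.pi)
    (hmat : P_E z * R (2 * k / Real.sin φ) * P_E x * R a₀ * P_E y * R a₂ = 1)
    (hcos : y ^ 2 = x ^ 2 + z ^ 2 + 2 * x * z * Real.cos (2 * φ))
    (L : ℝ) (hL : L = x + y + z) :
    k = 2 * Real.sin φ ^ 3 / L := by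
  have hs : Real.sin φ ≠ 0 := (Real.sin_pos_of_pos_of_lt_pi hφ.1 hφ.2).ne'
  have hxz : x * z ≠ 0 := by positivity
  have hk := mul_mul_eq_of_period_three hmat
  have hlaw := sub_mul_add_eq_of_law_of_cosines hcos
  rw [← hL] at hlaw
  have hL0 : L ≠ 0 := by
    rintro rfl
    simp [hx.ne', hz.ne', hs] at hlaw
  field_simp at hk
  rw [eq_div_iff hL0]
  refine mul_right_cancel₀ hxz ?_
  linear_combination L / 2 * hk + Real.sin φ / 2 * hlaw

theorem stmt_10 (x y z φ k a₀ a₂ : ℝ) (hx : 0 < x) (hy : 0 < y) (hz : 0 < z)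
    (hφ : φ ∈ Set.Ioo 0 Real.pi)
    (hmat : P_E z * R (2 * k / Real.sin φ) * P_E x * R a₀ * P_E y * R a₂ = 1)
    (hcos : y ^ 2 = x ^ 2 + z ^ 2 + 2 * x * z * Real.cos (2 * φ))
    (L : ℝ) (hL : L = x + y + z) :
    k = 2 * Real.sin φ ^ 3 / L :=
  stmt_10_general x y z φ k a₀ a₂ hx hz hφ hmat hcos L hL
end

section
/- Let x, y, z be real numbers with sin(x)·sin(z) ≠ 0, let φ be a real number with sin(φ) ≠ 0, and let k be a real number. Assume that sin(x + z) − sin(y) = (2k / sin(φ)) · sin(x) · sin(z), that cos(y) = cos(x + z) + 2 sin²(φ) · sin(x) · sin(z), and that L = x + y + z satisfies L = π or L = 3π or L = 5π. Then k = 0. -/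
/-! On a sphere, perimeter `L ∈ {π, 3π, 5π}` forces `y ≡ π - (x + z)` modulo `2π`, so
`sin y = sin (x + z)`. The compatibility condition then reads
`0 = (2k / sin φ) sin x sin z`, and the non-vanishing factors leave `k = 0`. -/

open Real

theorem Real.sin_eq_sin_of_add_eq_odd_mul_pi {a b : ℝ} (n : ℤ) (h : a + b = (2 * n + 1) * π) :
    sin a = sin b := by
  rw [show a = π - b + n * (2 * π) by linarith, sin_add_int_mul_two_pi, sin_pi_sub]

theorem eq_zero_of_div_mul_mul_eq_zero {k s a b : ℝ} (hs : s ≠ 0) (hab : a * b ≠ 0)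
    (h : 2 * k / s * a * b = 0) : k = 0 := by
  rw [mul_assoc, mul_eq_zero, div_eq_zero_iff] at h
  rcases h with (h | h) | h
  · linarith
  · exact absurd h hs
  · exact absurd h hab

theorem stmt_15_general (x y z φ k : ℝ) (hxz : Real.sin x * Real.sin z ≠ 0)
    (hφ : Real.sin φ ≠ 0)
    (hcompat : Real.sin (x + z) - Real.sin y =
      (2 * k / Real.sin φ) * Real.sin x * Real.sin z)
    (L : ℝ) (hL : L = x + y + z)
    (hLval : L = Real.pi ∨ L = 3 * Real.pi ∨ L = 5 * Real.pi) :
    k = 0 := by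
  obtain ⟨n, hn⟩ : ∃ n : ℤ, L = (2 * n + 1) * π := by
    rcases hLval with h | h | h
    exacts [⟨0, by rw [h]; ring⟩, ⟨1, by rw [h]; ring⟩, ⟨2, by rw [h]; ring⟩]
  have hsin : Real.sin y = Real.sin (x + z) :=
    Real.sin_eq_sin_of_add_eq_odd_mul_pi n (by linarith)
  rw [hsin, sub_self] at hcompat
  exact eq_zero_of_div_mul_mul_eq_zero hφ hxz hcompat.symm

theorem stmt_15 (x y z φ k : ℝ) (hxz : Real.sin x * Real.sin z ≠ 0)
    (hφ : Real.sin φ ≠ 0)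
    (hcompat : Real.sin (x + z) - Real.sin y =
      (2 * k / Real.sin φ) * Real.sin x * Real.sin z)
    (hcos : Real.cos y =
      Real.cos (x + z) + 2 * Real.sin φ ^ 2 * Real.sin x * Real.sin z)
    (L : ℝ) (hL : L = x + y + z)
    (hLval : L = Real.pi ∨ L = 3 * Real.pi ∨ L = 5 * Real.pi) :
    k = 0 :=
  stmt_15_general x y z φ k hxz hφ hcompat L hL hLval
end
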